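/- For fixed π ∈ (0,1), the function m ↦ 1/π - m(1-π)^m/(1-(1-π)^m) is increasing in m (over positive integers) and converges to 1/π as m → ∞. -/

import Mathlib

/-!
Write `q = 1 - π ∈ (0, 1)` and `f m = m q^m / (1 - q^m)`, so the expression is `1/π - f m`.
Clearing denominators and dividing by `q^m`, `f (m + 1) < f m` becomes `q (1 - q^m) < m (1 - q)`,
which follows from `q < 1` and Bernoulli's inequality `1 - q^m ≤ m (1 - q)`.
Since `m q^m → 0` and `q^m → 0`, also `f m → 0`.
-/

open Filter Topology

theorem one_sub_pow_le_mul_one_sub {q : ℝ} (hq : 0 ≤ q) (m : ℕ) : 1 - q ^ m ≤ m * (1 - q) := by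
  have := one_add_mul_le_pow (a := q - 1) (by linarith) m
  rw [add_sub_cancel] at this
  linarith

theorem succ_mul_pow_succ_div_one_sub_pow_succ_lt {q : ℝ} (hq0 : 0 < q) (hq1 : q < 1) {m : ℕ}
    (hm : 1 ≤ m) :
    (m + 1 : ℝ) * q ^ (m + 1) / (1 - q ^ (m + 1)) < m * q ^ m / (1 - q ^ m) := by
  have hqm : 0 < 1 - q ^ m := sub_pos.2 (pow_lt_one₀ hq0.le hq1 (by omega))
  have hqm' : 0 < 1 - q ^ (m + 1) := sub_pos.2 (pow_lt_one₀ hq0.le hq1 (by omega))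
  have key : q * (1 - q ^ m) < m * (1 - q) :=
    calc q * (1 - q ^ m) < 1 - q ^ m := mul_lt_of_lt_one_left hqm hq1
      _ ≤ m * (1 - q) := one_sub_pow_le_mul_one_sub hq0.le m
  rw [div_lt_div_iff₀ hqm' hqm, pow_succ]
  linear_combination mul_lt_mul_of_pos_left key (pow_pos hq0 m)

theorem mul_pow_div_one_sub_pow_lt {q : ℝ} (hq0 : 0 < q) (hq1 : q < 1) {m₁ m₂ : ℕ}
    (hm₁ : 1 ≤ m₁) (hm : m₁ < m₂) :
    m₂ * q ^ m₂ / (1 - q ^ m₂) < m₁ * q ^ m₁ / (1 - q ^ m₁) :=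
  Nat.rel_of_forall_rel_succ_of_le_of_lt (· > ·) (f := fun m : ℕ ↦ m * q ^ m / (1 - q ^ m))
    (fun _ hm ↦ by exact_mod_cast succ_mul_pow_succ_div_one_sub_pow_succ_lt hq0 hq1 hm) hm₁ hm

theorem tendsto_mul_pow_div_one_sub_pow {q : ℝ} (hq0 : 0 ≤ q) (hq1 : q < 1) :
    Tendsto (fun m : ℕ ↦ m * q ^ m / (1 - q ^ m)) atTop (𝓝 0) := by
  have hden : Tendsto (fun m : ℕ ↦ 1 - q ^ m) atTop (𝓝 1) := by
    simpa using tendsto_const_nhds.sub (tendsto_pow_atTop_nhds_zero_of_lt_one hq0 hq1)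
  have := (tendsto_self_mul_const_pow_of_lt_one hq0 hq1).div hden one_ne_zero
  rwa [zero_div] at this

/-- For fixed `π ∈ (0,1)`, `m ↦ 1/π - m(1-π)^m/(1-(1-π)^m)` is increasing in
the positive integer `m` and converges to `1/π` as `m → ∞`. -/
theorem irsa_waiting_time_monotone_limit (π : ℝ) (hπ0 : 0 < π) (hπ1 : π < 1) :
    (∀ m₁ m₂ : ℕ, 1 ≤ m₁ → m₁ < m₂ →
      1 / π - (m₁ : ℝ) * (1 - π) ^ m₁ / (1 - (1 - π) ^ m₁)
        < 1 / π - (m₂ : ℝ) * (1 - π) ^ m₂ / (1 - (1 - π) ^ m₂)) ∧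
    Tendsto (fun m : ℕ =>
        1 / π - (m : ℝ) * (1 - π) ^ m / (1 - (1 - π) ^ m))
      atTop (nhds (1 / π)) := by
  have hq0 : 0 < 1 - π := by linarith
  have hq1 : 1 - π < 1 := by linarith
  refine ⟨fun m₁ m₂ hm₁ hm ↦ sub_lt_sub_left (mul_pow_div_one_sub_pow_lt hq0 hq1 hm₁ hm) _, ?_⟩
  simpa using tendsto_const_nhds.sub (tendsto_mul_pow_div_one_sub_pow hq0.le hq1)
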